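/- arXiv:2005.04818 — 4 statements merged into one kernel-verified Lean document; each statement's English description precedes it below -/
import Mathlib

section
/- Let S = (N, M₀) be a live Petri net system. If the potential reachability graph of S is initially directed (i.e., for every marking M₁ satisfying the state equation M₁ = M₀ + I·Y for some Y ∈ ℕ^T, the reachability sets R(M₀) and R(M₁) intersect), then S is strongly live: for every marking M satisfying the state equation from M₀, the system (N, M) is live. -/
open Classical

structure PetriNet (P T : Type) where
  pre  : P → T → ℕ
  post : T → P → ℕ

namespace PetriNet

variable {P T : Type}

def enabled (N : PetriNet P T) (M : P → ℕ) (t : T) : Prop :=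
  ∀ p, N.pre p t ≤ M p

def fire (N : PetriNet P T) (M : P → ℕ) (t : T) : P → ℕ :=
  fun p => M p - N.pre p t + N.post t p

def feasible (N : PetriNet P T) : (P → ℕ) → List T → Prop
  | _, [] => True
  | M, t :: σ => N.enabled M t ∧ N.feasible (N.fire M t) σ

def fireSeq (N : PetriNet P T) : (P → ℕ) → List T → (P → ℕ)
  | M, [] => M
  | M, t :: σ => N.fireSeq (N.fire M t) σ

/-- `M'` is reachable from `M` by some feasible firing sequence. -/
def reach (N : PetriNet P T) (M M' : P → ℕ) : Prop :=
  ∃ σ : List T, N.feasible M σ ∧ N.fireSeq M σ = M'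

/-- Liveness: from every reachable marking, every transition can eventually be enabled. -/
def live (N : PetriNet P T) (M0 : P → ℕ) : Prop :=
  ∀ M, N.reach M0 M → ∀ t, ∃ M', N.reach M M' ∧ N.enabled M' t

def incidence (N : PetriNet P T) (p : P) (t : T) : ℤ :=
  (N.post t p : ℤ) - (N.pre p t : ℤ)

/-- Potential reachability: the state equation `M = M0 + I·Y` has a solution `Y ∈ ℕ^T`. -/
def potReach [Fintype T] (N : PetriNet P T) (M0 M : P → ℕ) : Prop :=
  ∃ Y : T → ℕ, ∀ p, (M p : ℤ) = (M0 p : ℤ) + ∑ t, N.incidence p t * (Y t : ℤ)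

/-- A siphon: a nonempty set of places whose set of input transitions is
included in its set of output transitions. -/
def siphon (N : PetriNet P T) (D : Set P) : Prop :=
  D.Nonempty ∧ ∀ t, (∃ p ∈ D, 0 < N.post t p) → ∃ p ∈ D, 0 < N.pre p t

/-- `D` is deadlocked at `M`: every place of `D` marks below each of its output weights. -/
def deadlockedAt (N : PetriNet P T) (D : Set P) (M : P → ℕ) : Prop :=
  ∀ p ∈ D, ∀ t, 0 < N.pre p t → M p < N.pre p t

def reversible (N : PetriNet P T) (M0 : P → ℕ) : Prop :=
  ∀ M, N.reach M0 M → N.reach M M0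

def deadlockable (N : PetriNet P T) (M0 : P → ℕ) : Prop :=
  ∃ M, N.reach M0 M ∧ ∀ t, ¬ N.enabled M t

def bounded (N : PetriNet P T) (M0 : P → ℕ) : Prop :=
  ∃ k, ∀ M, N.reach M0 M → ∀ p, M p ≤ k

def structBounded (N : PetriNet P T) : Prop :=
  ∀ M0 : P → ℕ, N.bounded M0

/-- All output weights of each place are equal. -/
def homogeneous (N : PetriNet P T) : Prop :=
  ∀ p t t', 0 < N.pre p t → 0 < N.pre p t' → N.pre p t = N.pre p t'

/-- A place with at least two output transitions. -/
def sharedPlace (N : PetriNet P T) (p : P) : Prop :=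
  ∃ t t', t ≠ t' ∧ 0 < N.pre p t ∧ 0 < N.pre p t'

/-- Homogeneous net with at most one shared place. -/
def H1S (N : PetriNet P T) : Prop :=
  N.homogeneous ∧ ∀ p q, N.sharedPlace p → N.sharedPlace q → p = q

/-- H1S net such that deleting the shared place (if any) yields a WMG≤ :
every non-shared place has at most one input and at most one output transition. -/
def H1S_WMGle (N : PetriNet P T) : Prop :=
  N.H1S ∧ ∀ p, ¬ N.sharedPlace p →
    (∀ t t', 0 < N.post t p → 0 < N.post t' p → t = t') ∧
    (∀ t t', 0 < N.pre p t → 0 < N.pre p t' → t = t')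

end PetriNet

lemma reach_trans {P T : Type} (N : PetriNet P T) {M M' M'' : P → ℕ}
    (h1 : N.reach M M') (h2 : N.reach M' M'') : N.reach M M'' := by
  obtain ⟨σ, hf, hs⟩ := h1
  obtain ⟨σ', hf', hs'⟩ := h2
  refine ⟨σ ++ σ', ?_, ?_⟩
  · clear hs'
    induction σ generalizing M with
    | nil =>
        simp only [PetriNet.fireSeq] at hs
        subst hs; simpa using hf'
    | cons t σ ih =>
      obtain ⟨he, hfe⟩ := hf
      exact ⟨he, ih hfe hs⟩
  · clear hf hf'
    induction σ generalizing M with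
    | nil =>
        simp only [PetriNet.fireSeq] at hs
        subst hs; simpa using hs'
    | cons t σ ih => exact ih hs
  
lemma reach_state_eq {P T : Type} (N : PetriNet P T) (σ : List T) :
    ∀ M : P → ℕ, N.feasible M σ →
      ∀ p, (N.fireSeq M σ p : ℤ) = M p + (σ.map (fun t => N.incidence p t)).sum := by
  induction σ with
  | nil => intro M _ p; simp [PetriNet.fireSeq]
  | cons t σ ih =>
    intro M ⟨he, hf⟩ p
    have := ih (N.fire M t) hf p
    simp only [PetriNet.fireSeq, List.map_cons, List.sum_cons] at this ⊢
    rw [this]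
    have hle := he p
    have : ((N.fire M t) p : ℤ) = M p + N.incidence p t := by
      simp [PetriNet.fire, PetriNet.incidence]
      push_cast [Nat.sub_add_cancel hle, hle]
      ring
    rw [this]; ring

lemma reach_potReach {P T : Type} [Fintype T] (N : PetriNet P T) {M M' : P → ℕ}
    (h : N.reach M M') : N.potReach M M' := by
  obtain ⟨σ, hf, hs⟩ := h
  refine ⟨fun t => σ.count t, fun p => ?_⟩
  rw [← hs, reach_state_eq N σ M hf p]
  congr 1
  rw [Finset.sum_list_map_count]
  rw [← Finset.sum_subset (Finset.subset_univ σ.toFinset)]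
  · exact Finset.sum_congr rfl (fun t _ => by
      simp [nsmul_eq_mul]; ring)
  · intro t _ ht
    simp [List.count_eq_zero_of_not_mem (by simpa using ht)]

lemma potReach_trans {P T : Type} [Fintype T] (N : PetriNet P T) {M M' M'' : P → ℕ}
    (h1 : N.potReach M M') (h2 : N.potReach M' M'') : N.potReach M M'' := by
  obtain ⟨Y, hY⟩ := h1
  obtain ⟨Y', hY'⟩ := h2
  refine ⟨fun t => Y t + Y' t, fun p => ?_⟩
  rw [hY' p, hY p]
  rw [add_assoc, ← Finset.sum_add_distrib]
  congr 1
  exact Finset.sum_congr rfl (fun t _ => by push_cast; ring)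

/-- a live system whose potential reachability graph is initially
directed is strongly live: every potentially reachable marking is live. -/
theorem stmt1 {P T : Type} [Fintype T] (N : PetriNet P T) (M0 : P → ℕ)
    (hlive : N.live M0)
    (hdir : ∀ M1, N.potReach M0 M1 → ∃ M, N.reach M0 M ∧ N.reach M1 M) :
    ∀ M, N.potReach M0 M → N.live M := by
  intro M hM M' hMM' t
  have hM' : N.potReach M0 M' := potReach_trans N hM (reach_potReach N hMM')
  obtain ⟨Mc, hc0, hc1⟩ := hdir M' hM'
  obtain ⟨M'', h1, h2⟩ := hlive Mc hc0 t
  exact ⟨M'', reach_trans N hc1 h1, h2⟩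
end

section
/- Let S = (N, M₀) be a persistent Petri net system, and let τ and σ be two firing sequences feasible at M₀. Then the sequences τ·(σ ⧵ τ) and σ·(τ ⧵ σ) are both feasible at M₀ and lead to the same marking, where σ ⧵ τ denotes the left residue of σ with respect to τ (Keller's theorem). -/
open Classical

namespace PetriNet

/-- Left residue of a sequence with respect to another sequence:
cancel in the first sequence the leftmost occurrences of the symbols of the second,
read from left to right. -/
def residue {T : Type} [DecidableEq T] : List T → List T → List T
  | τ, [] => τ
  | τ, t :: σ => residue (τ.erase t) σ

/-- Persistence: at every reachable marking, firing one enabled transition cannot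
disable another enabled transition. -/
def persistent {P T : Type} (N : PetriNet P T) (M0 : P → ℕ) : Prop :=
  ∀ M, N.reach M0 M → ∀ t1 t2, t1 ≠ t2 → N.enabled M t1 → N.enabled M t2 →
    N.enabled (N.fire M t1) t2

end PetriNet

/-!
Induction on `τ` reduces everything to a single transition `t`. Pushing `t`
through `σ` one step at a time, persistence keeps `t` enabled while it meets only other
transitions, and two transitions that are enabled together and do not disable each other commute.
If `t` occurs in `σ`, it is absorbed at its first occurrence; otherwise it is still enabled at the end.
The residue is `List.diff`, so the bookkeeping on residues comes from the list library.
-/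

namespace PetriNet

variable {P T : Type} (N : PetriNet P T)

theorem fireSeq_append (M : P → ℕ) (σ σ' : List T) :
    N.fireSeq M (σ ++ σ') = N.fireSeq (N.fireSeq M σ) σ' := by
  induction σ generalizing M with
  | nil => rfl
  | cons t σ ih => exact ih _

theorem feasible_append (M : P → ℕ) (σ σ' : List T) :
    N.feasible M (σ ++ σ') ↔ N.feasible M σ ∧ N.feasible (N.fireSeq M σ) σ' := by
  induction σ generalizing M with
  | nil => simp [feasible, fireSeq]
  | cons t σ ih => simp [feasible, fireSeq, ih, and_assoc]

theorem reach_refl (M : P → ℕ) : N.reach M M :=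
  ⟨[], trivial, rfl⟩

theorem reach_trans {M₁ M₂ M₃ : P → ℕ} (h₁₂ : N.reach M₁ M₂) (h₂₃ : N.reach M₂ M₃) :
    N.reach M₁ M₃ := by
  obtain ⟨σ, hσ, rfl⟩ := h₁₂
  obtain ⟨σ', hσ', rfl⟩ := h₂₃
  exact ⟨σ ++ σ', (N.feasible_append M₁ σ σ').2 ⟨hσ, hσ'⟩, N.fireSeq_append M₁ σ σ'⟩

theorem reach_fire {M : P → ℕ} {t : T} (ht : N.enabled M t) : N.reach M (N.fire M t) :=
  ⟨[t], ⟨ht, trivial⟩, rfl⟩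

variable {N}

theorem persistent.of_reach {M₀ M : P → ℕ} (hp : N.persistent M₀) (hM : N.reach M₀ M) :
    N.persistent M :=
  fun _ h => hp _ (N.reach_trans hM h)

theorem persistent.fire {M : P → ℕ} {t : T} (hp : N.persistent M) (ht : N.enabled M t) :
    N.persistent (N.fire M t) :=
  hp.of_reach (N.reach_fire ht)

theorem persistent.enabled_fire {M : P → ℕ} {t s : T} (hp : N.persistent M) (hts : t ≠ s)
    (ht : N.enabled M t) (hs : N.enabled M s) : N.enabled (N.fire M t) s :=
  hp M (N.reach_refl M) t s hts ht hs

theorem fire_comm {M : P → ℕ} {t s : T} (ht : N.enabled M t) (hs : N.enabled M s)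
    (hts : N.enabled (N.fire M t) s) (hst : N.enabled (N.fire M s) t) :
    N.fire (N.fire M t) s = N.fire (N.fire M s) t := by
  funext p
  have := ht p; have := hs p; have := hts p; have := hst p
  simp only [fire] at *
  omega

theorem residue_eq_diff [DecidableEq T] (τ σ : List T) : residue τ σ = τ.diff σ := by
  induction σ generalizing τ with
  | nil => rfl
  | cons t σ ih => rw [residue, ih, List.diff_cons]

theorem cons_diff_eq_singleton_diff_append [DecidableEq T] (t : T) (τ σ : List T) :
    (t :: τ).diff σ = [t].diff σ ++ τ.diff (σ.erase t) := by
  by_cases ht : t ∈ σ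
  · simp [List.cons_diff_of_mem ht]
  · simp [List.cons_diff_of_not_mem ht, List.erase_of_not_mem ht]

theorem keller_singleton [DecidableEq T] {M : P → ℕ} {t : T} {σ : List T}
    (hp : N.persistent M) (ht : N.enabled M t) (hσ : N.feasible M σ) :
    N.feasible (N.fire M t) (σ.erase t) ∧ N.feasible (N.fireSeq M σ) ([t].diff σ) ∧
      N.fireSeq (N.fire M t) (σ.erase t) = N.fireSeq (N.fireSeq M σ) ([t].diff σ) := by
  induction σ generalizing M with
  | nil => exact ⟨trivial, ⟨ht, trivial⟩, rfl⟩
  | cons s σ ih =>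
    obtain ⟨hs, hσ⟩ := hσ
    by_cases hst : s = t
    · subst hst
      simpa [fireSeq, feasible] using hσ
    · have hts : N.enabled (N.fire M t) s := hp.enabled_fire (Ne.symm hst) ht hs
      have hcomm := fire_comm ht hs hts (hp.enabled_fire hst hs ht)
      obtain ⟨h₁, h₂, h₃⟩ := ih (hp.fire hs) (hp.enabled_fire hst hs ht) hσ
      have hs_t : s ∉ [t] := by simpa using hst
      rw [List.erase_cons_tail (by simpa using hst), List.diff_cons, List.erase_of_not_mem hs_t]
      simp only [feasible, fireSeq, hcomm]
      exact ⟨⟨hts, h₁⟩, h₂, h₃⟩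

theorem keller [DecidableEq T] {M : P → ℕ} {τ σ : List T}
    (hp : N.persistent M) (hτ : N.feasible M τ) (hσ : N.feasible M σ) :
    N.feasible (N.fireSeq M τ) (σ.diff τ) ∧ N.feasible (N.fireSeq M σ) (τ.diff σ) ∧
      N.fireSeq (N.fireSeq M τ) (σ.diff τ) = N.fireSeq (N.fireSeq M σ) (τ.diff σ) := by
  induction τ generalizing M σ with
  | nil => simpa [fireSeq, feasible] using hσ
  | cons t τ ih =>
    obtain ⟨ht, hτ⟩ := hτ
    obtain ⟨hσt, hres, hsquare⟩ := keller_singleton hp ht hσ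
    obtain ⟨h₁, h₂, h₃⟩ := ih (hp.fire ht) hτ hσt
    rw [List.diff_cons, cons_diff_eq_singleton_diff_append, N.feasible_append,
      N.fireSeq_append, ← hsquare]
    exact ⟨h₁, ⟨hres, h₂⟩, h₃⟩

end PetriNet

/-- Keller's theorem: in a persistent system, for feasible `τ` and `σ`,
`τ·(σ ∖ τ)` and `σ·(τ ∖ σ)` are feasible and lead to the same marking. -/
theorem stmt4 {P T : Type} [DecidableEq T] (N : PetriNet P T) (M0 : P → ℕ)
    (hpers : N.persistent M0) (τ σ : List T)
    (hτ : N.feasible M0 τ) (hσ : N.feasible M0 σ) :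
    N.feasible M0 (τ ++ PetriNet.residue σ τ) ∧
    N.feasible M0 (σ ++ PetriNet.residue τ σ) ∧
    N.fireSeq M0 (τ ++ PetriNet.residue σ τ) =
      N.fireSeq M0 (σ ++ PetriNet.residue τ σ) := by
  obtain ⟨h₁, h₂, h₃⟩ := PetriNet.keller hpers hτ hσ
  simp only [PetriNet.residue_eq_diff, N.feasible_append, N.fireSeq_append]
  exact ⟨⟨hτ, h₁⟩, ⟨hσ, h₂⟩, h₃⟩
end

section
/- There exists a unit-weighted, live, structurally bounded homogeneous Petri net system with exactly two shared places (an H2S-WMG system) that enables a T-sequence but is not reversible. Concretely: the net with places p₀,…,p₇, transitions t₀,…,t₃, with arcs t₂→p₂→t₂, p₂→t₁, t₃→p₂, p₁→t₃, t₁→p₁, t₀→p₇→t₃, t₀→p₁, p₁→t₀, p₀→t₀, t₂→p₀, t₀→p₃→t₂, t₂→p₄→t₁, t₁→p₅→t₂, t₃→p₆→t₀ (all weights 1), initial marking M₀ = (p₀:1, p₁:1, p₂:0, p₃:0, p₄:1, p₅:1, p₆:1, p₇:1), is live, bounded, enables the T-sequence t₀ t₃ t₂ t₁ (which returns to M₀),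 yet the marking reached by firing t₃ t₁ t₀ from M₀ cannot reach M₀ back. -/
open Classical

/-- The concrete H2S-WMG net of the counter-example: places p0..p7, transitions
t0..t3, all arc weights 1. Row `p`, column `t` of the first matrix is `W(p,t)`;
row `t`, column `p` of the second matrix is `W(t,p)`. -/
def N14 : PetriNet (Fin 8) (Fin 4) where
  pre := fun p t =>
    (!![1,0,0,0;
        1,0,0,1;
        0,1,1,0;
        0,0,1,0;
        0,1,0,0;
        0,0,1,0;
        1,0,0,0;
        0,0,0,1] : Matrix (Fin 8) (Fin 4) ℕ) p t
  post := fun t p =>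
    (!![0,1,0,1,0,0,0,1;
        0,1,0,0,0,1,0,0;
        1,0,1,0,1,0,0,0;
        0,0,1,0,0,0,1,0] : Matrix (Fin 4) (Fin 8) ℕ) t p

def M14 : Fin 8 → ℕ := ![1,1,0,0,1,1,1,1]

instance decEnabled' {P T : Type} [Fintype P] (N : PetriNet P T) (M : P → ℕ) (t : T) :
    Decidable (N.enabled M t) :=
  decidable_of_iff (∀ p, N.pre p t ≤ M p) Iff.rfl

instance decFeasible {P T : Type} [Fintype P] (N : PetriNet P T) :
    ∀ (σ : List T) (M : P → ℕ), Decidable (N.feasible M σ)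
  | [], _ => isTrue trivial
  | t :: σ, M => @instDecidableAnd _ _ _ (decFeasible N σ (N.fire M t))

instance decFeasible2 {P T : Type} [Fintype P] (N : PetriNet P T) (M : P → ℕ)
    (σ : List T) : Decidable (N.feasible M σ) := decFeasible N σ M

lemma fireSeq_closed {P T : Type} (N : PetriNet P T) (S : (P → ℕ) → Prop)
    (h : ∀ M, S M → ∀ t, N.enabled M t → S (N.fire M t)) :
    ∀ (σ : List T) (M : P → ℕ), S M → N.feasible M σ → S (N.fireSeq M σ)
  | [], _, hM, _ => hM
  | t :: σ, M, hM, hf => fireSeq_closed N S h σ _ (h M hM t hf.1) hf.2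

lemma reach_mem {P T : Type} (N : PetriNet P T) (S : (P → ℕ) → Prop)
    (h : ∀ M, S M → ∀ t, N.enabled M t → S (N.fire M t))
    {M M' : P → ℕ} (hM : S M) (hr : N.reach M M') : S M' := by
  obtain ⟨σ, hf, he⟩ := hr
  exact he ▸ fireSeq_closed N S h σ M hM hf

lemma sum_fire (M : Fin 8 → ℕ) (t : Fin 4) (h : N14.enabled M t) :
    ∑ p, N14.fire M t p = ∑ p, M p := by
  rw [Fin.sum_univ_eight, Fin.sum_univ_eight]
  fin_cases t
  ·
    have h0 : 1 ≤ M 0 := h 0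
    have h1 : 1 ≤ M 1 := h 1
    have h6 : 1 ≤ M 6 := h 6
    show (M 0 - 1 + 0) + (M 1 - 1 + 1) + (M 2 - 0 + 0) + (M 3 - 0 + 1) + (M 4 - 0 + 0) + (M 5 - 0 + 0) + (M 6 - 1 + 0) + (M 7 - 0 + 1) = _
    omega
  ·
    have h2 : 1 ≤ M 2 := h 2
    have h4 : 1 ≤ M 4 := h 4
    show (M 0 - 0 + 0) + (M 1 - 0 + 1) + (M 2 - 1 + 0) + (M 3 - 0 + 0) + (M 4 - 1 + 0) + (M 5 - 0 + 1) + (M 6 - 0 + 0) + (M 7 - 0 + 0) = _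
    omega
  ·
    have h2 : 1 ≤ M 2 := h 2
    have h3 : 1 ≤ M 3 := h 3
    have h5 : 1 ≤ M 5 := h 5
    show (M 0 - 0 + 1) + (M 1 - 0 + 0) + (M 2 - 1 + 1) + (M 3 - 1 + 0) + (M 4 - 0 + 1) + (M 5 - 1 + 0) + (M 6 - 0 + 0) + (M 7 - 0 + 0) = _
    omega
  ·
    have h1 : 1 ≤ M 1 := h 1
    have h7 : 1 ≤ M 7 := h 7
    show (M 0 - 0 + 0) + (M 1 - 1 + 0) + (M 2 - 0 + 1) + (M 3 - 0 + 0) + (M 4 - 0 + 0) + (M 5 - 0 + 0) + (M 6 - 0 + 1) + (M 7 - 1 + 0) = _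
    omega

lemma N14_structBounded : N14.structBounded := by
  intro M0
  refine ⟨∑ p, M0 p, fun M hM p => ?_⟩
  have hsum : (∑ q, M q) = ∑ q, M0 q :=
    reach_mem N14 (fun M => ∑ q, M q = ∑ q, M0 q)
      (fun M hM t ht => (sum_fire M t ht).trans hM) rfl hM
  calc M p ≤ ∑ q, M q :=
        Finset.single_le_sum (fun i _ => Nat.zero_le _) (Finset.mem_univ p)
    _ = ∑ q, M0 q := hsum

def Slist : List (Fin 8 → ℕ) :=
  [![1,1,0,0,1,1,1,1], ![0,0,1,1,0,2,2,0], ![0,0,1,1,1,1,1,1], ![0,1,0,1,0,2,1,1],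
   ![0,1,0,1,1,1,0,2], ![1,0,1,0,1,1,2,0], ![1,0,1,0,2,0,1,1], ![1,1,0,0,0,2,2,0]]

def S2list : List (Fin 8 → ℕ) :=
  [![0,0,1,1,0,2,2,0], ![0,1,0,1,0,2,1,1], ![1,0,1,0,1,1,2,0], ![1,1,0,0,0,2,2,0]]

lemma S_closed : ∀ M ∈ Slist, ∀ t, N14.enabled M t → N14.fire M t ∈ Slist := by decide

lemma S2_closed : ∀ M ∈ S2list, ∀ t, N14.enabled M t → N14.fire M t ∈ S2list := by decide

lemma N14_live : N14.live M14 := by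
  intro M hM t
  have hS : M ∈ Slist :=
    reach_mem N14 (· ∈ Slist) S_closed (by decide) hM
  fin_cases hS <;> fin_cases t <;>
    first
      | exact ⟨_, ⟨[], trivial, rfl⟩, by decide⟩
      | exact ⟨_, ⟨[0], by decide, rfl⟩, by decide⟩
      | exact ⟨_, ⟨[1], by decide, rfl⟩, by decide⟩
      | exact ⟨_, ⟨[2], by decide, rfl⟩, by decide⟩
      | exact ⟨_, ⟨[3], by decide, rfl⟩, by decide⟩
      | exact ⟨_, ⟨[0,3], by decide, rfl⟩, by decide⟩
      | exact ⟨_, ⟨[1,0], by decide, rfl⟩, by decide⟩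
      | exact ⟨_, ⟨[2,1], by decide, rfl⟩, by decide⟩
      | exact ⟨_, ⟨[3,2], by decide, rfl⟩, by decide⟩
      | exact ⟨_, ⟨[0,3,2], by decide, rfl⟩, by decide⟩
      | exact ⟨_, ⟨[1,0,3], by decide, rfl⟩, by decide⟩
      | exact ⟨_, ⟨[2,1,0], by decide, rfl⟩, by decide⟩
      | exact ⟨_, ⟨[3,2,1], by decide, rfl⟩, by decide⟩

lemma N14_notreach : ¬ N14.reach (N14.fireSeq M14 [3, 1, 0]) M14 := by
  intro h
  have h0 : (N14.fireSeq M14 [3, 1, 0]) ∈ S2list := by decide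
  have : M14 ∈ S2list := reach_mem N14 (· ∈ S2list) S2_closed h0 h
  exact absurd this (by decide)


/-- the net `N14` with marking `M14` is unit-weighted, homogeneous,
has exactly the two shared places `p1` and `p2`, is live and structurally bounded,
enables the T-sequence `t0 t3 t2 t1` (returning to `M14` and containing every
transition), yet the marking reached by firing `t3 t1 t0` cannot reach `M14` back,
so the system is not reversible. -/
theorem stmt14 :
    (∀ p t, N14.pre p t ≤ 1) ∧ (∀ t p, N14.post t p ≤ 1) ∧
    N14.homogeneous ∧
    (∀ p : Fin 8, N14.sharedPlace p ↔ (p = 1 ∨ p = 2)) ∧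
    N14.live M14 ∧
    N14.structBounded ∧
    N14.feasible M14 [0, 3, 2, 1] ∧
    N14.fireSeq M14 [0, 3, 2, 1] = M14 ∧
    (∀ t : Fin 4, t ∈ ([0, 3, 2, 1] : List (Fin 4))) ∧
    N14.feasible M14 [3, 1, 0] ∧
    ¬ N14.reach (N14.fireSeq M14 [3, 1, 0]) M14 ∧
    ¬ N14.reversible M14 := by
  refine ⟨by decide, by decide, ?_, ?_, N14_live, N14_structBounded, by decide, by decide,
    by decide, by decide, N14_notreach, ?_⟩
  · unfold PetriNet.homogeneous; decide
  · unfold PetriNet.sharedPlace; decide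
  · intro hrev
    exact N14_notreach (hrev _ ⟨[3, 1, 0], by decide, rfl⟩)
end

section
/- Let S be a Petri net system in which each place has a finite structural bound, and let t be a transition whose pre-set decomposes as •t = π ∪ {p'} where every p ∈ π satisfies SB(p,S) ≤ W(p,t). Then for every potentially reachable marking M ∈ PR(S), transition t is not enabled at M if and only if SB(p',S)·Σ_{p∈π} M(p) + M(p') < SB(p',S)·Σ_{p∈π} W(p,t) + W(p',t). -/
open Classical

/-- if every place has a (finite, attained) structural bound `SB`,
and the pre-set of `t` is `π ∪ {p'}` with `SB(p) ≤ W(p,t)` for every `p ∈ π`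
(and `W(p',t) ≤ SB(p')`), then for every potentially reachable `M`, `t` is not
enabled at `M` iff
`SB(p')·Σ_{p∈π} M(p) + M(p') < SB(p')·Σ_{p∈π} W(p,t) + W(p',t)`. -/
theorem stmt18 {P T : Type} [Fintype T] (N : PetriNet P T) (M0 : P → ℕ)
    (SB : P → ℕ)
    (hSB : ∀ p, (∀ M, N.potReach M0 M → M p ≤ SB p) ∧
      ∃ M, N.potReach M0 M ∧ M p = SB p)
    (t : T) (π : Finset P) (p' : P) (hp' : p' ∉ π)
    (hpreset : ∀ p, 0 < N.pre p t ↔ (p ∈ π ∨ p = p'))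
    (hπ : ∀ p ∈ π, SB p ≤ N.pre p t)
    (hp'SB : N.pre p' t ≤ SB p') :
    ∀ M, N.potReach M0 M →
      (¬ N.enabled M t ↔
        SB p' * (∑ p ∈ π, M p) + M p' <
          SB p' * (∑ p ∈ π, N.pre p t) + N.pre p' t) := by
  intro M hM
  have hW' : 0 < N.pre p' t := (hpreset p').mpr (Or.inr rfl)
  have hMle : ∀ p ∈ π, M p ≤ N.pre p t := fun p hp =>
    le_trans ((hSB p).1 M hM) (hπ p hp)
  have hM'SB : M p' ≤ SB p' := (hSB p').1 M hM
  have hAB : ∑ p ∈ π, M p ≤ ∑ p ∈ π, N.pre p t := Finset.sum_le_sum hMle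
  have hen : ¬ N.enabled M t ↔
      ((∑ p ∈ π, M p) < (∑ p ∈ π, N.pre p t) ∨ M p' < N.pre p' t) := by
    constructor
    · intro hne
      by_contra h
      push_neg at h
      obtain ⟨h1, h2⟩ := h
      apply hne
      intro p
      by_cases hp : 0 < N.pre p t
      · rcases (hpreset p).mp hp with hpi | rfl
        · by_contra hlt
          push_neg at hlt
          have : ∑ p ∈ π, M p < ∑ p ∈ π, N.pre p t :=
            Finset.sum_lt_sum hMle ⟨p, hpi, hlt⟩
          omega
        · exact h2
      · omega
    · intro h hen
      rcases h with h | h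
      · have : ∑ p ∈ π, N.pre p t ≤ ∑ p ∈ π, M p :=
          Finset.sum_le_sum (fun p _ => hen p)
        omega
      · exact absurd (hen p') (by omega)
  rw [hen]
  set A := ∑ p ∈ π, M p with hA
  set B := ∑ p ∈ π, N.pre p t with hB
  constructor
  · rintro (h | h)
    · have h3 : SB p' * (A + 1) ≤ SB p' * B := Nat.mul_le_mul_left _ h
      rw [Nat.mul_add, Nat.mul_one] at h3
      omega
    · have := Nat.mul_le_mul_left (SB p') hAB
      omega
  · intro h
    rcases lt_or_ge A B with h1 | h1
    · exact Or.inl h1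
    · have := Nat.mul_le_mul_left (SB p') h1
      right; omega
end
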